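/- arXiv:math/0604051 — 7 statements merged into one kernel-verified Lean document; each statement's English description precedes it below -/
import Mathlib

section
/- Let G be a locally compact, second countable, nilpotent topological group and let π be a unitary representation of G on a complex Hilbert space H. If π is strongly cohomological, then π is trivial, i.e., π(g) is the identity operator for every g ∈ G. -/
open scoped ContinuousFunctionalCalculus

lemma commute_cfc_of_commute {A : Type*} [CStarAlgebra A] {a b : A} [ha : IsStarNormal a]
    (f : ℂ → ℂ) (h1 : Commute b a) (h2 : Commute b (star a)) : Commute b (cfc f a) := by
  by_cases hf : ContinuousOn f (spectrum ℂ a)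
  · have hmem : cfc f a ∈ StarAlgebra.elemental ℂ a := by
      rw [cfc_apply f a, cfcHom_eq_of_isStarNormal]
      exact SetLike.coe_mem _
    refine StarAlgebra.elemental.induction_on (P := fun u _ => Commute b u) (hy := hmem)
      (self := h1) (star_self := h2) (algebraMap := fun r => (Algebra.commutes r b).symm)
      (add := fun u _ v _ hcu hcv => hcu.add_right hcv)
      (mul := fun u _ v _ hcu hcv => hcu.mul_right hcv)
      (closure := fun s _ hcs v hv => ?_)
    have hcl : IsClosed {u : A | Commute b u} :=
      isClosed_eq (continuous_mul_left b) (continuous_mul_right b)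
    exact closure_minimal (fun u hu => hcs u hu) hcl hv
  · rw [cfc_apply_of_not_continuousOn a hf]
    exact Commute.zero_right b

/-- A unitary representation `π` of a topological group `G` on a complex Hilbert space is
*strongly cohomological* if every nonzero closed invariant subspace `W` carries a continuous
1-cocycle (for the restricted representation) which is not a coboundary. -/
def IsStronglyCohomological {G : Type*} [Group G] [TopologicalSpace G]
    {H : Type*} [NormedAddCommGroup H] [InnerProductSpace ℂ H] [CompleteSpace H]
    (π : G →* (H ≃ₗᵢ[ℂ] H)) : Prop :=
  ∀ W : Submodule ℂ H, IsClosed (W : Set H) → (∀ g : G, ∀ v ∈ W, π g v ∈ W) → W ≠ ⊥ →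
    ∃ b : G → H, Continuous b ∧ (∀ g, b g ∈ W) ∧
      (∀ g h : G, b (g * h) = π g (b h) + b g) ∧
      ¬ ∃ v ∈ W, ∀ g : G, b g = π g v - v

/-- A strongly cohomological unitary representation of a locally compact,
second countable, nilpotent group is trivial. -/
theorem trivial_of_stronglyCohomological_of_nilpotent
    {G : Type*} [Group G] [TopologicalSpace G] [IsTopologicalGroup G]
    [LocallyCompactSpace G] [SecondCountableTopology G] [Group.IsNilpotent G]
    {H : Type*} [NormedAddCommGroup H] [InnerProductSpace ℂ H] [CompleteSpace H]
    (π : G →* (H ≃ₗᵢ[ℂ] H)) (hπcont : ∀ v : H, Continuous fun g => π g v)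
    (hsc : IsStronglyCohomological π) :
    ∀ g : G, ∀ v : H, π g v = v := by
  by_contra hcon
  push_neg at hcon
  obtain ⟨g₀, v₀', hg₀⟩ := hcon
  classical
  -- pointwise application of products
  have hmul : ∀ (a c : G) (v : H), π (a * c) v = π a (π c v) := by
    intro a c v
    rw [map_mul]
    rfl
  have hone : ∀ v : H, π 1 v = v := by
    intro v
    rw [map_one]
    rfl
  -- find `z` in the upper central series, trivial one step below, with `π z ≠ 1`
  obtain ⟨n₀, hn₀⟩ := Group.IsNilpotent.nilpotent (G := G)
  set Ptriv : ℕ → Prop := fun k => ∀ x ∈ Subgroup.upperCentralSeries G k, ∀ v : H, π x v = v with hP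
  have hex : ∃ k, ¬ Ptriv k := ⟨n₀, fun hk => hg₀ (hk g₀ (hn₀ ▸ Subgroup.mem_top g₀) v₀')⟩
  obtain ⟨m, hmspec, hmlt⟩ : ∃ m, ¬ Ptriv m ∧ ∀ k < m, Ptriv k :=
    ⟨Nat.find hex, Nat.find_spec hex,
      fun k hk => not_not.mp (fun hkk => Nat.find_min hex hk hkk)⟩
  have hm0 : m ≠ 0 := by
    intro h0
    apply hmspec
    rw [h0, hP]
    intro x hx v
    have hx1 : x = 1 := Subgroup.mem_bot.mp (by rwa [Subgroup.upperCentralSeries_zero] at hx)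
    rw [hx1]
    exact hone v
  obtain ⟨m', rfl⟩ : ∃ m', m = m' + 1 := ⟨m - 1, (Nat.succ_pred_eq_of_pos (Nat.pos_of_ne_zero hm0)).symm⟩
  have htriv : ∀ x ∈ Subgroup.upperCentralSeries G m', ∀ v : H, π x v = v := hmlt m' (Nat.lt_succ_self m')
  simp only [hP] at hmspec
  push_neg at hmspec
  obtain ⟨z, hzmem, v₀, hzv⟩ := hmspec
  have hcz : ∀ g : G, z * g * z⁻¹ * g⁻¹ ∈ Subgroup.upperCentralSeries G m' :=
    Subgroup.mem_upperCentralSeries_succ_iff.mp hzmem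
  -- `π z` commutes pointwise with every `π g`
  have hcommzg : ∀ (g : G) (v : H), π z (π g v) = π g (π z v) := by
    intro g v
    have h1 : z * g = (z * g * z⁻¹ * g⁻¹) * (g * z) := by group
    calc π z (π g v) = π (z * g) v := (hmul z g v).symm
      _ = π ((z * g * z⁻¹ * g⁻¹) * (g * z)) v := by rw [← h1]
      _ = π (z * g * z⁻¹ * g⁻¹) (π (g * z) v) := hmul _ _ v
      _ = π (g * z) v := htriv _ (hcz g) _
      _ = π g (π z v) := hmul g z v
  have hinvz : ∀ v : H, π z⁻¹ (π z v) = v := by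
    intro v
    rw [← hmul, inv_mul_cancel]
    exact hone v
  have hinvz' : ∀ v : H, π z (π z⁻¹ v) = v := by
    intro v
    rw [← hmul, mul_inv_cancel]
    exact hone v
  have hcommzg' : ∀ (g : G) (v : H), π z⁻¹ (π g v) = π g (π z⁻¹ v) := by
    intro g v
    conv_lhs => rw [← hinvz' v]
    rw [← hcommzg g (π z⁻¹ v), hinvz]
  -- the unitary operator `U = π z` and its adjoint
  set U : H →L[ℂ] H := ((π z : H ≃ₗᵢ[ℂ] H) : H →L[ℂ] H) with hUdef
  have hUa : ∀ v : H, U v = π z v := fun _ => rfl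
  have hstarUa : ∀ v : H, (star U) v = π z⁻¹ v := by
    intro v
    rw [hUdef, LinearIsometryEquiv.star_eq_symm]
    show (π z).symm v = π z⁻¹ v
    apply (π z).injective
    rw [(π z).apply_symm_apply, hinvz']
  haveI hUnormal : IsStarNormal U := by
    constructor
    ext v
    simp only [ContinuousLinearMap.mul_apply]
    rw [hstarUa, hUa, hUa, hstarUa, hinvz, hinvz']
  set πL : G → (H →L[ℂ] H) := fun g => ((π g : H ≃ₗᵢ[ℂ] H) : H →L[ℂ] H) with hπLdef
  have hπLa : ∀ (g : G) (v : H), πL g v = π g v := fun _ _ => rfl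
  have hcommOp : ∀ g : G, Commute (πL g) U := by
    intro g
    ext v
    simp only [ContinuousLinearMap.mul_apply, hπLa, hUa]
    exact (hcommzg g v).symm
  have hcommOp' : ∀ g : G, Commute (πL g) (star U) := by
    intro g
    ext v
    simp only [ContinuousLinearMap.mul_apply, hπLa, hstarUa]
    exact (hcommzg' g v).symm
  -- nontriviality
  have hv₀ : v₀ ≠ 0 := by
    intro h0
    apply hzv
    rw [h0, map_zero]
  haveI : Nontrivial (H →L[ℂ] H) := by
    refine ⟨1, 0, fun h01 => hv₀ ?_⟩
    calc v₀ = (1 : H →L[ℂ] H) v₀ := rfl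
      _ = (0 : H →L[ℂ] H) v₀ := by rw [h01]
      _ = 0 := rfl
  have hUne : U - 1 ≠ 0 := by
    intro h0
    apply hzv
    have : U v₀ - v₀ = 0 := by
      have := congrArg (fun T : H →L[ℂ] H => T v₀) h0
      simpa using this
    rw [← hUa v₀, sub_eq_zero.mp this]
  have hr : 0 < ‖U - 1‖ := norm_pos_iff.mpr hUne
  set r := ‖U - 1‖ with hrdef
  -- find a spectral value far from 1
  have hsubU : cfc (fun w : ℂ => w - 1) U = U - 1 := by
    rw [cfc_sub (fun w : ℂ => w) (fun _ : ℂ => 1) U, cfc_id' ℂ U, cfc_const_one ℂ U]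
  have hgr := IsGreatest.norm_cfc (fun w : ℂ => w - 1) U
  rw [hsubU] at hgr
  obtain ⟨lam, hlammem, hlameq⟩ := hgr.1
  have hlam : ‖lam - 1‖ = r := by simpa using hlameq
  -- the spectral cut-off function
  set f : ℂ → ℂ := fun w => ((max (‖w - 1‖ - r / 2) 0 : ℝ) : ℂ) with hfdef
  have hfc : Continuous f := by
    apply Complex.continuous_ofReal.comp
    exact ((continuous_norm.comp (continuous_id.sub continuous_const)).sub
      continuous_const).max continuous_const
  set A₀ : H →L[ℂ] H := cfc f U with hA₀def
  have hA₀ : A₀ ≠ 0 := by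
    intro h0
    have hle : ‖f lam‖ ≤ ‖A₀‖ :=
      norm_apply_le_norm_cfc f U hlammem hfc.continuousOn
    rw [h0, norm_zero] at hle
    have : ‖f lam‖ = r / 2 := by
      rw [hfdef]
      simp only [Complex.norm_real]
      rw [hlam, max_eq_left (by linarith), Real.norm_eq_abs, abs_of_pos (by linarith)]
      ring
    linarith
  -- the partial inverse function
  set hfun : ℂ → ℂ := fun w => (starRingEnd ℂ) (w - 1) * (((max ‖w - 1‖ (r / 2))⁻¹ : ℝ) : ℂ) ^ 2
    with hhdef
  have hhc : Continuous hfun := by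
    apply Continuous.mul
    · exact Complex.continuous_conj.comp (continuous_id.sub continuous_const)
    · apply Continuous.pow
      apply Complex.continuous_ofReal.comp
      apply Continuous.inv₀
      · exact (continuous_norm.comp (continuous_id.sub continuous_const)).max continuous_const
      · intro w
        exact ne_of_gt (lt_max_of_lt_right (by linarith))
  have key : ∀ w : ℂ, hfun w * ((w - 1) * f w) = f w := by
    intro w
    rcases le_or_gt ‖w - 1‖ (r / 2) with hw | hw
    · have hf0 : f w = 0 := by
        rw [hfdef]
        simp only
        rw [max_eq_right (by linarith)]
        simp
      rw [hf0, mul_zero, mul_zero]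
    · have hmax : max ‖w - 1‖ (r / 2) = ‖w - 1‖ := max_eq_left hw.le
      have hwne : w - 1 ≠ 0 := by
        intro h0
        rw [h0, norm_zero] at hw
        linarith
      have hnne : ‖w - 1‖ ≠ 0 := norm_ne_zero_iff.mpr hwne
      have hkey : (starRingEnd ℂ) (w - 1) * (w - 1) = ((‖w - 1‖ ^ 2 : ℝ) : ℂ) := by
        rw [mul_comm, Complex.mul_conj]
        norm_cast
        rw [Complex.normSq_eq_norm_sq]
      rw [hhdef]
      simp only
      rw [hmax]
      have : (starRingEnd ℂ) (w - 1) * (((‖w - 1‖⁻¹ : ℝ) : ℂ)) ^ 2 * ((w - 1) * f w)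
          = ((starRingEnd ℂ) (w - 1) * (w - 1)) * (((‖w - 1‖⁻¹ : ℝ) : ℂ)) ^ 2 * f w := by ring
      rw [this, hkey]
      have hcast : ((‖w - 1‖ ^ 2 : ℝ) : ℂ) * (((‖w - 1‖⁻¹ : ℝ) : ℂ)) ^ 2 = 1 := by
        push_cast
        field_simp
        have habs : (‖w - 1‖ : ℝ) ≠ 0 := by
          exact hnne
        exact div_self (Complex.ofReal_ne_zero.mpr habs)
      rw [hcast, one_mul]
  set B : H →L[ℂ] H := cfc hfun U with hBdef
  have hBA : B * ((U - 1) * A₀) = A₀ := by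
    have e1 : (U - 1) * A₀ = cfc (fun w : ℂ => (w - 1) * f w) U := by
      rw [cfc_mul (fun w : ℂ => w - 1) f U (continuous_id.sub continuous_const).continuousOn
        hfc.continuousOn, hsubU]
    have e2 : B * ((U - 1) * A₀) = cfc (fun w : ℂ => hfun w * ((w - 1) * f w)) U := by
      rw [cfc_mul hfun (fun w : ℂ => (w - 1) * f w) U hhc.continuousOn
        (by exact (((continuous_id.sub continuous_const).mul hfc)).continuousOn), e1]
    rw [e2]
    exact cfc_congr fun w _ => key w
  -- commutation of the representation with the spectral operators
  have hcommA : ∀ g : G, Commute (πL g) A₀ := fun g =>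
    commute_cfc_of_commute f (hcommOp g) (hcommOp' g)
  have hcommB : ∀ g : G, Commute (πL g) B := fun g =>
    commute_cfc_of_commute hfun (hcommOp g) (hcommOp' g)
  have hcommAB : Commute B A₀ := cfc_commute_cfc hfun f U
  -- the invariant subspace
  set W : Submodule ℂ H := (LinearMap.range (A₀ : H →ₗ[ℂ] H)).topologicalClosure with hWdef
  have hWclosed : IsClosed (W : Set H) := Submodule.isClosed_topologicalClosure _
  have hWc : (W : Set H) = closure (LinearMap.range (A₀ : H →ₗ[ℂ] H) : Set H) :=
    Submodule.topologicalClosure_coe _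
  have hstable : ∀ T : H →L[ℂ] H, Commute T A₀ → ∀ v ∈ W, T v ∈ W := by
    intro T hT v hv
    have h1 : T '' (LinearMap.range (A₀ : H →ₗ[ℂ] H) : Set H) ⊆ (LinearMap.range (A₀ : H →ₗ[ℂ] H) : Set H) := by
      rintro _ ⟨u, ⟨w, rfl⟩, rfl⟩
      refine ⟨T w, ?_⟩
      have h2 := congrArg (fun S : H →L[ℂ] H => S w) hT
      simpa [ContinuousLinearMap.mul_apply] using h2.symm
    have hv' : v ∈ closure (LinearMap.range (A₀ : H →ₗ[ℂ] H) : Set H) := by rw [← hWc]; exact hv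
    have h3 : T v ∈ closure (LinearMap.range (A₀ : H →ₗ[ℂ] H) : Set H) :=
      closure_mono h1 (image_closure_subset_closure_image T.continuous ⟨v, hv', rfl⟩)
    show T v ∈ (W : Set H)
    rw [hWc]
    exact h3
  have hWne : W ≠ ⊥ := by
    intro h0
    apply hA₀
    ext w
    have h1 : A₀ w ∈ W := Submodule.le_topologicalClosure _ (LinearMap.mem_range_self (A₀ : H →ₗ[ℂ] H) w)
    rw [h0] at h1
    simpa using h1
  have hWinv : ∀ g : G, ∀ v ∈ W, π g v ∈ W := by
    intro g v hv
    have := hstable (πL g) (hcommA g) v hv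
    rwa [hπLa] at this
  -- inversion of `U - 1` on `W`
  have hTinv : ∀ v ∈ W, B (U v - v) = v := by
    have hcl : IsClosed {v : H | B (U v - v) = v} :=
      isClosed_eq (B.continuous.comp (U.continuous.sub continuous_id)) continuous_id
    have hsub : (LinearMap.range (A₀ : H →ₗ[ℂ] H) : Set H) ⊆ {v : H | B (U v - v) = v} := by
      rintro _ ⟨w, rfl⟩
      have h1 := congrArg (fun S : H →L[ℂ] H => S w) hBA
      simpa [ContinuousLinearMap.mul_apply, ContinuousLinearMap.sub_apply,
        ContinuousLinearMap.one_apply] using h1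
    intro v hv
    have hv' : v ∈ closure (LinearMap.range (A₀ : H →ₗ[ℂ] H) : Set H) := by rw [← hWc]; exact hv
    exact closure_minimal hsub hcl hv'
  -- apply strong cohomologicality
  obtain ⟨b, hbcont, hbW, hbcoc, hbnot⟩ := hsc W hWclosed hWinv hWne
  have hb1 : b 1 = 0 := by
    have h11 := hbcoc 1 1
    rw [mul_one, hone] at h11
    exact (right_eq_add.mp h11)
  -- key commutator identity for the cocycle
  have hstep : ∀ x : G, (∀ v, π x v = v) → (∀ v, π (z * x * z⁻¹ * x⁻¹) v = v) →
      U (b x) - b x = b (z * x * z⁻¹ * x⁻¹) := by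
    intro x hx hc
    have h1 : b (z * x) = π z (b x) + b z := hbcoc z x
    have h2 : z * x = (z * x * z⁻¹ * x⁻¹) * (x * z) := by group
    have h3 : b (z * x) = b (x * z) + b (z * x * z⁻¹ * x⁻¹) := by
      conv_lhs => rw [h2]
      rw [hbcoc, hc]
    have h4 : b (x * z) = π x (b z) + b x := hbcoc x z
    rw [hx] at h4
    calc U (b x) - b x = (π z (b x) + b z) - (b z + b x) := by rw [hUa]; abel
      _ = ((b z + b x) + b (z * x * z⁻¹ * x⁻¹)) - (b z + b x) := by rw [← h1, h3, h4]
      _ = b (z * x * z⁻¹ * x⁻¹) := by abel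
  -- the cocycle vanishes along the upper central series below `z`
  have hvanish : ∀ k, k ≤ m' → ∀ x ∈ Subgroup.upperCentralSeries G k, b x = 0 := by
    intro k
    induction k with
    | zero =>
      intro _ x hx
      have hx1 : x = 1 := by
        rw [Subgroup.upperCentralSeries_zero] at hx
        exact Subgroup.mem_bot.mp hx
      rw [hx1]
      exact hb1
    | succ k ih =>
      intro hk x hx
      have hkm : k ≤ m' := le_trans (Nat.le_succ k) hk
      have hxle : x ∈ Subgroup.upperCentralSeries G m' := Subgroup.upperCentralSeries_mono G hk hx
      have hxtriv : ∀ v, π x v = v := fun v => htriv x hxle v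
      have hcmem : z * x * z⁻¹ * x⁻¹ ∈ Subgroup.upperCentralSeries G k := by
        have h5 : x * z * x⁻¹ * z⁻¹ ∈ Subgroup.upperCentralSeries G k :=
          Subgroup.mem_upperCentralSeries_succ_iff.mp hx z
        have h6 := inv_mem h5
        rwa [show (x * z * x⁻¹ * z⁻¹)⁻¹ = z * x * z⁻¹ * x⁻¹ by group] at h6
      have hcmem' : z * x * z⁻¹ * x⁻¹ ∈ Subgroup.upperCentralSeries G m' :=
        Subgroup.upperCentralSeries_mono G hkm hcmem
      have hctriv : ∀ v, π (z * x * z⁻¹ * x⁻¹) v = v := fun v => htriv _ hcmem' v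
      have h6 := hstep x hxtriv hctriv
      rw [ih hkm _ hcmem] at h6
      have h7 : b x = B (U (b x) - b x) := (hTinv (b x) (hbW x)).symm
      rw [h6, map_zero] at h7
      exact h7
  -- conclude: `b` is a coboundary, contradiction
  apply hbnot
  refine ⟨B (b z), hstable B hcommAB (b z) (hbW z), fun g => ?_⟩
  have hctriv : ∀ v, π (z * g * z⁻¹ * g⁻¹) v = v := fun v => htriv _ (hcz g) v
  have hc0 : b (z * g * z⁻¹ * g⁻¹) = 0 := hvanish m' le_rfl _ (hcz g)
  have h1 : b (z * g) = π z (b g) + b z := hbcoc z g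
  have h2 : z * g = (z * g * z⁻¹ * g⁻¹) * (g * z) := by group
  have h3 : b (z * g) = b (g * z) := by
    conv_lhs => rw [h2]
    rw [hbcoc, hctriv, hc0, add_zero]
  have h4 : b (g * z) = π g (b z) + b g := hbcoc g z
  have h5 : U (b g) - b g = π g (b z) - b z := by
    calc U (b g) - b g = (π z (b g) + b z) - (b z + b g) := by rw [hUa]; abel
      _ = (π g (b z) + b g) - (b z + b g) := by rw [← h1, h3, h4]
      _ = π g (b z) - b z := by abel
  have h6 : b g = B (π g (b z) - b z) := by
    rw [← h5]
    exact (hTinv (b g) (hbW g)).symm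
  rw [h6, map_sub]
  congr 1
  have h7 := congrArg (fun S : H →L[ℂ] H => S (b z)) (hcommB g)
  simp only [ContinuousLinearMap.mul_apply, hπLa] at h7
  exact h7.symm
end

section
/- Let G be a topological group, π a unitary representation of G on a complex Hilbert space H, and z a central element of G such that the operator 1 − π(z) has a bounded inverse. Then every 1-cocycle for π is a coboundary: for every continuous b : G → H with b(gh) = π(g)b(h) + b(g) for all g,h, there exists v ∈ H with b(g) = π(g)v − v for all g ∈ G. -/
/-- Guichardet. If `z` is a central element of `G` and the operator
`1 - π(z)` has a bounded inverse, then every continuous 1-cocycle for the unitary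
representation `π` is a coboundary. -/
theorem cocycle_isCoboundary_of_central_inverse
    {G : Type*} [Group G] [TopologicalSpace G] [IsTopologicalGroup G]
    {H : Type*} [NormedAddCommGroup H] [InnerProductSpace ℂ H] [CompleteSpace H]
    (π : G →* (H ≃ₗᵢ[ℂ] H)) (hπcont : ∀ v : H, Continuous fun g => π g v)
    (z : G) (hz : z ∈ Subgroup.center G)
    (hinv : ∃ S : H →L[ℂ] H, (∀ v : H, S (v - π z v) = v) ∧ (∀ v : H, S v - π z (S v) = v))
    (b : G → H) (hbcont : Continuous b)
    (hb : ∀ g h : G, b (g * h) = π g (b h) + b g) :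
    ∃ v : H, ∀ g : G, b g = π g v - v := by
  obtain ⟨S, hS1, hS2⟩ := hinv
  have hzc : ∀ g : G, g * z = z * g := fun g => Subgroup.mem_center_iff.mp hz g
  -- π g commutes with π z
  have hcommπ : ∀ (g : G) (u : H), π g (π z u) = π z (π g u) := by
    intro g u
    have : π (g * z) u = π (z * g) u := by rw [hzc g]
    simpa [map_mul] using this
  -- S commutes with π g
  have hcommS : ∀ (g : G) (u : H), S (π g u) = π g (S u) := by
    intro g u
    have h1 := hS1 (π g (S u))
    rw [← hcommπ g (S u), ← map_sub (π g), hS2 u] at h1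
    exact h1
  refine ⟨-S (b z), fun g => ?_⟩
  have key : b g - π z (b g) = b z - π g (b z) := by
    have h1 := hb g z
    have h2 := hb z g
    rw [hzc g, h2] at h1
    rw [sub_eq_sub_iff_add_eq_add]
    rw [add_comm] at h1
    rw [h1]
    abel
  have := hS1 (b g)
  rw [key, map_sub, hcommS] at this
  rw [← this]
  simp only [map_neg]
  abel
end

section
/- Let G be a locally compact, second countable topological group and let π be a unitary representation of G on a complex Hilbert space H. If π is strongly cohomological, then π is trivial on the centre of G: π(z) is the identity operator for every z in the centre of G. -/
open scoped InnerProductSpace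

set_option maxHeartbeats 1000000


lemma commute_cfc_of_commute_s5 {A : Type*} [CStarAlgebra A] {S T : A}
    (hS : IsSelfAdjoint S) (h : Commute T S) (f : ℝ → ℝ) : Commute T (cfc f S) := by
  by_cases hf : ContinuousOn f (spectrum ℝ S)
  · have key : ∀ g : C(spectrum ℝ S, ℝ), Commute T (cfcHom hS g) := by
      let C : Subalgebra ℝ A := Subalgebra.centralizer ℝ {T}
      let P : Subalgebra ℝ C(spectrum ℝ S, ℝ) := C.comap (cfcHom hS (R := ℝ)).toAlgHom
      have hid : (ContinuousMap.restrict (spectrum ℝ S) (ContinuousMap.id ℝ)) ∈ P := by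
        simp only [P, Subalgebra.mem_comap, StarAlgHom.coe_toAlgHom, cfcHom_id]
        exact Subalgebra.mem_centralizer_iff ℝ |>.mpr (by rintro x rfl; exact h.eq)
      have hPsep : P.SeparatesPoints := by
        rintro x y hxy
        exact ⟨_, ⟨_, hid, rfl⟩, fun hc => hxy (Subtype.ext hc)⟩
      have hPclosed : IsClosed (P : Set C(spectrum ℝ S, ℝ)) := by
        have hset : (P : Set C(spectrum ℝ S, ℝ)) =
            (cfcHom hS (R := ℝ)) ⁻¹' {x : A | T * x - x * T = 0} := by
          ext g
          simp only [SetLike.mem_coe, P, Subalgebra.mem_comap, StarAlgHom.coe_toAlgHom, C,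
            Subalgebra.mem_centralizer_iff, Set.mem_preimage, Set.mem_setOf_eq, sub_eq_zero,
            Set.mem_singleton_iff, forall_eq]
        rw [hset]
        apply IsClosed.preimage (cfcHom_isClosedEmbedding hS (R := ℝ)).continuous
        have : {x : A | T * x - x * T = 0} = (fun x : A => T * x - x * T) ⁻¹' {0} := rfl
        rw [this]
        exact IsClosed.preimage (by continuity) isClosed_singleton
      have hPtop : P = ⊤ := by
        have := ContinuousMap.subalgebra_topologicalClosure_eq_top_of_separatesPoints P hPsep
        rwa [SetLike.ext'_iff, Subalgebra.topologicalClosure_coe, hPclosed.closure_eq,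
          ← SetLike.ext'_iff] at this
      intro g
      have hg : g ∈ P := hPtop ▸ Algebra.mem_top
      exact ((Subalgebra.mem_centralizer_iff ℝ).mp hg T rfl)
    rw [cfc_apply f S hS hf]
    exact key _
  · rw [cfc_apply_of_not_continuousOn S hf]
    exact Commute.zero_right T


/-- A strongly cohomological unitary representation of a locally compact,
second countable group is trivial on the centre. -/
theorem stronglyCohomological_trivial_on_center
    {G : Type*} [Group G] [TopologicalSpace G] [IsTopologicalGroup G]
    [LocallyCompactSpace G] [SecondCountableTopology G]
    {H : Type*} [NormedAddCommGroup H] [InnerProductSpace ℂ H] [CompleteSpace H]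
    (π : G →* (H ≃ₗᵢ[ℂ] H)) (hπcont : ∀ v : H, Continuous fun g => π g v)
    (hsc : IsStronglyCohomological π) :
    ∀ z ∈ Subgroup.center G, ∀ v : H, π z v = v := by
  intro z hz v
  by_contra hne
  haveI : Nontrivial H := ⟨⟨π z v, v, hne⟩⟩
  haveI : Nontrivial (H →L[ℂ] H) := inferInstance
  have hπmul : ∀ g h : G, ∀ x : H, π (g * h) x = π g (π h x) := by
    intro g h x; rw [map_mul]; rfl
  set u : H →L[ℂ] H := ((π z : H ≃ₗᵢ[ℂ] H) : H →L[ℂ] H) with hu_def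
  set u' : H →L[ℂ] H := ((π z⁻¹ : H ≃ₗᵢ[ℂ] H) : H →L[ℂ] H) with hu'_def
  have hstar : star u = u' := by
    rw [ContinuousLinearMap.star_eq_adjoint, LinearIsometryEquiv.adjoint_eq_symm]
    ext x
    show (π z).symm x = π z⁻¹ x
    have : π z (π z⁻¹ x) = x := by
      rw [← hπmul, mul_inv_cancel, map_one]; rfl
    conv_lhs => rw [← this]
    rw [LinearIsometryEquiv.symm_apply_apply]
  have huu' : u' * u = 1 := by
    ext x
    show π z⁻¹ (π z x) = x
    rw [← hπmul, inv_mul_cancel, map_one]; rfl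
  set T : H →L[ℂ] H := 1 - u with hT_def
  set S : H →L[ℂ] H := star T * T with hS_def
  have hS : IsSelfAdjoint S := by
    rw [hS_def, IsSelfAdjoint, star_mul, star_star]
  have hSnonneg : (0 : H →L[ℂ] H) ≤ S := star_mul_self_nonneg T
  have hSsum : S = (1 - u) + (1 - u') := by
    rw [hS_def, hT_def, star_sub, star_one, hstar, sub_mul, one_mul, mul_sub, mul_one, huu']
    abel
  have hSne : S ≠ 0 := by
    intro h0
    have hTv : T v ≠ 0 := by
      rw [hT_def]
      simp only [ContinuousLinearMap.sub_apply, ContinuousLinearMap.one_apply]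
      intro hc
      apply hne
      have hcoe : u v = π z v := rfl
      rw [hcoe, sub_eq_zero] at hc
      exact hc.symm
    have : ⟪S v, v⟫_ℂ = ⟪T v, T v⟫_ℂ := by
      rw [hS_def, ContinuousLinearMap.mul_apply, ContinuousLinearMap.star_eq_adjoint,
        ContinuousLinearMap.adjoint_inner_left]
    rw [h0] at this
    simp only [ContinuousLinearMap.zero_apply, inner_zero_left] at this
    exact hTv (inner_self_eq_zero.mp this.symm)
  obtain ⟨a, ha_mem, ha_pos⟩ : ∃ a ∈ spectrum ℝ S, 0 < a := by
    by_contra hcon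
    push_neg at hcon
    apply hSne
    have hzero : (spectrum ℝ S).EqOn id (fun _ => (0:ℝ)) := by
      intro x hx
      have h1 := spectrum_nonneg_of_nonneg hSnonneg hx
      have h2 := hcon x hx
      simp only [id]
      linarith
    calc S = cfc (id : ℝ → ℝ) S := (cfc_id ℝ S).symm
    _ = cfc (fun _ => (0:ℝ)) S := cfc_congr hzero
    _ = 0 := by simp
  -- the ramp function
  set f : ℝ → ℝ := fun t => max 0 (min 1 ((2*t - a)/a)) with hf_def
  have hf_cont : Continuous f := by
    apply continuous_const.max (continuous_const.min _)
    exact (by continuity : Continuous fun t : ℝ => (2*t - a)/a)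
  have hf0 : ∀ t : ℝ, t ≤ a/2 → f t = 0 := by
    intro t ht
    have h1 : (2*t - a)/a ≤ 0 := div_nonpos_iff.mpr (Or.inr ⟨by linarith, ha_pos.le⟩)
    rw [hf_def]
    exact max_eq_left (le_trans (min_le_right _ _) h1)
  have hfa : f a = 1 := by
    rw [hf_def]
    have : (2*a - a)/a = 1 := by field_simp; ring
    simp [this]
  have hf_nonneg : ∀ t, 0 ≤ f t := fun t => le_max_left _ _
  set P : H →L[ℂ] H := cfc f S with hP_def
  have hPsa : IsSelfAdjoint P := cfc_predicate f S
  have hPadj : ContinuousLinearMap.adjoint P = P := by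
    rw [← ContinuousLinearMap.star_eq_adjoint]; exact hPsa
  have hP_ne : P ≠ 0 := by
    have h1 : (1:ℝ) ∈ spectrum ℝ P := by
      rw [hP_def, cfc_map_spectrum f S hS hf_cont.continuousOn]
      exact ⟨a, ha_mem, hfa⟩
    intro h0
    rw [h0, spectrum.mem_iff] at h1
    apply h1
    rw [sub_zero]
    exact (isUnit_one).map (algebraMap ℝ (H →L[ℂ] H))
  set W : Submodule ℂ H := (LinearMap.range (P : H →ₗ[ℂ] H)).topologicalClosure with hW_def
  have hWclosed : IsClosed (W : Set H) := Submodule.isClosed_topologicalClosure _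
  have hWset : (W : Set H) = closure (Set.range P) := by
    rw [hW_def, Submodule.topologicalClosure_coe]
    congr 1
  have hrange_sub : ∀ x : H, P x ∈ W :=
    fun x => Submodule.le_topologicalClosure _ ⟨x, rfl⟩
  have hWne : W ≠ ⊥ := by
    intro hbot
    apply hP_ne
    ext x
    have := hrange_sub x
    rw [hbot, Submodule.mem_bot] at this
    simpa using this
  have hzc : ∀ g : G, g * z = z * g := fun g => Subgroup.mem_center_iff.mp hz g
  have hzc' : ∀ g : G, g * z⁻¹ = z⁻¹ * g := fun g =>
    Subgroup.mem_center_iff.mp (Subgroup.inv_mem _ hz) g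
  have hUcommS : ∀ g : G, Commute ((π g : H ≃ₗᵢ[ℂ] H) : H →L[ℂ] H) S := by
    intro g
    have hcu : Commute ((π g : H ≃ₗᵢ[ℂ] H) : H →L[ℂ] H) u := by
      ext x
      show π g (π z x) = π z (π g x)
      rw [← hπmul, ← hπmul, hzc]
    have hcu' : Commute ((π g : H ≃ₗᵢ[ℂ] H) : H →L[ℂ] H) u' := by
      ext x
      show π g (π z⁻¹ x) = π z⁻¹ (π g x)
      rw [← hπmul, ← hπmul, hzc']
    rw [hSsum]
    exact ((Commute.one_right _).sub_right hcu).add_right ((Commute.one_right _).sub_right hcu')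
  have hUcommP : ∀ g : G, Commute ((π g : H ≃ₗᵢ[ℂ] H) : H →L[ℂ] H) P :=
    fun g => commute_cfc_of_commute_s5 hS (hUcommS g) f
  have hUS_apply : ∀ (g : G) (x : H), S (π g x) = π g (S x) := by
    intro g x
    have := congrArg (fun (A : H →L[ℂ] H) => A x) (hUcommS g).eq
    exact (this : π g (S x) = S (π g x)).symm
  have hUP_apply : ∀ (g : G) (x : H), P (π g x) = π g (P x) := by
    intro g x
    have := congrArg (fun (A : H →L[ℂ] H) => A x) (hUcommP g).eq
    exact (this : π g (P x) = P (π g x)).symm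
  have hWinv : ∀ g : G, ∀ w ∈ W, π g w ∈ W := by
    intro g w hw
    have hmaps : Set.MapsTo (π g) (Set.range P) (Set.range P) := by
      rintro y ⟨x, rfl⟩
      exact ⟨π g x, hUP_apply g x⟩
    have hcl := hmaps.closure ((π g).continuous)
    have hw' : w ∈ closure (Set.range P) := by rw [← hWset]; exact hw
    have := hcl hw'
    rw [← SetLike.mem_coe, hWset]
    exact this
  -- the positivity estimate
  have hfc : ContinuousOn f (spectrum ℝ S) := hf_cont.continuousOn
  have hQpos : (0:H →L[ℂ] H) ≤ cfc (fun t => (t - a/2) * (f t * f t)) S := by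
    apply cfc_nonneg
    intro x _
    rcases le_or_gt x (a/2) with hx | hx
    · rw [hf0 x hx]; simp
    · have := hf_nonneg x
      exact mul_nonneg (by linarith) (mul_nonneg this this)
  have e1 : cfc (fun t : ℝ => t * f t) S = S * P := by
    rw [cfc_mul (fun t : ℝ => t) f S (continuous_id.continuousOn) hfc, cfc_id' ℝ S]
  have e2 : cfc (fun t : ℝ => f t * (t * f t)) S = P * (S * P) := by
    rw [cfc_mul f (fun t : ℝ => t * f t) S hfc ((continuous_id.mul hf_cont).continuousOn), e1]
  have e3 : cfc (fun t : ℝ => (a/2) * (f t * f t)) S = (a/2) • (P * P) := by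
    rw [cfc_const_mul (a/2) (fun t : ℝ => f t * f t) S ((hf_cont.mul hf_cont).continuousOn),
      cfc_mul f f S hfc hfc]
  have hQeq : cfc (fun t => (t - a/2) * (f t * f t)) S
      = P * (S * P) - (a/2) • (P * P) := by
    have e4 : (fun t : ℝ => (t - a/2) * (f t * f t))
        = fun t : ℝ => f t * (t * f t) - (a/2) * (f t * f t) := by
      funext t; ring
    rw [e4, cfc_sub (fun t : ℝ => f t * (t * f t)) (fun t : ℝ => (a/2) * (f t * f t)) S
      ((hf_cont.mul (continuous_id.mul hf_cont)).continuousOn)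
      ((continuous_const.mul (hf_cont.mul hf_cont)).continuousOn), e2, e3]
  have hQpos' : (P * (S * P) - (a/2) • (P * P)).IsPositive := by
    have := (ContinuousLinearMap.le_def 0 (P * (S * P) - (a/2) • (P * P))).mp
      (hQeq ▸ hQpos)
    rwa [sub_zero] at this
  have hPinner : ∀ x y : H, ⟪P y, x⟫_ℂ = ⟪y, P x⟫_ℂ := by
    intro x y
    conv_lhs => rw [← hPadj]
    rw [ContinuousLinearMap.adjoint_inner_left]
  have hbound : ∀ x : H, a/2 * (‖P x‖ * ‖P x‖) ≤ ‖S (P x)‖ * ‖P x‖ := by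
    intro x
    have h5 := hQpos'.re_inner_nonneg_left x
    have happ : (P * (S * P) - (a/2) • (P * P)) x
        = P (S (P x)) - (a/2 : ℝ) • (P (P x)) := by
      simp [ContinuousLinearMap.mul_apply]
    have hsm : ⟪(a/2 : ℝ) • P (P x), x⟫_ℂ = (a/2 : ℝ) • ⟪P (P x), x⟫_ℂ := by
      rw [RCLike.real_smul_eq_coe_smul (K := ℂ), inner_smul_left, RCLike.conj_ofReal,
        RCLike.real_smul_eq_coe_mul]
    rw [happ, inner_sub_left, hPinner, hsm, hPinner] at h5
    have h6 : RCLike.re ((a/2 : ℝ) • ⟪P x, P x⟫_ℂ) = a/2 * (‖P x‖ * ‖P x‖) := by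
      rw [RCLike.smul_re, inner_self_eq_norm_mul_norm]
    rw [map_sub, h6] at h5
    have h7 : RCLike.re ⟪S (P x), P x⟫_ℂ ≤ ‖S (P x)‖ * ‖P x‖ :=
      le_trans (RCLike.re_le_norm _) (norm_inner_le_norm _ _)
    linarith
  have hlow : ∀ w ∈ W, a/2 * ‖w‖ ≤ ‖S w‖ := by
    intro w hw
    have hcl : IsClosed {y : H | a/2 * ‖y‖ ≤ ‖S y‖} := by
      apply isClosed_le
      · exact continuous_const.mul continuous_norm
      · exact (S.continuous.norm)
    have hsub : Set.range P ⊆ {y : H | a/2 * ‖y‖ ≤ ‖S y‖} := by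
      rintro y ⟨x, rfl⟩
      rcases eq_or_ne (P x) 0 with h0 | h0
      · simp [h0]
      · have hpos : 0 < ‖P x‖ := norm_pos_iff.mpr h0
        have := hbound x
        have h8 : (a/2 * ‖P x‖) * ‖P x‖ ≤ ‖S (P x)‖ * ‖P x‖ := by
          calc (a/2 * ‖P x‖) * ‖P x‖ = a/2 * (‖P x‖ * ‖P x‖) := by ring
          _ ≤ ‖S (P x)‖ * ‖P x‖ := this
        exact Set.mem_setOf_eq ▸ (le_of_mul_le_mul_right h8 hpos)
    have hw' : w ∈ closure (Set.range P) := by rw [← hWset]; exact hw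
    exact (closure_minimal hsub hcl) hw'
  have hinjW : ∀ w ∈ W, S w = 0 → w = 0 := by
    intro w hw h0
    have := hlow w hw
    rw [h0, norm_zero] at this
    have : ‖w‖ ≤ 0 := by nlinarith
    exact norm_le_zero_iff.mp this
  -- surjectivity of S on W
  set k : ℝ → ℝ := fun t => (max t (a/2))⁻¹ with hk_def
  have hk_cont : Continuous k := by
    apply (continuous_id.max continuous_const).inv₀
    intro t
    exact ne_of_gt (lt_of_lt_of_le (by linarith) (le_max_right t (a/2)))
  have hkey : ∀ x : H, P x = S (P (cfc k S x)) := by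
    intro x
    have h1 : cfc (fun t : ℝ => f t * k t) S = P * cfc k S :=
      cfc_mul f k S hfc hk_cont.continuousOn
    have h2 : cfc (fun t : ℝ => t * (f t * k t)) S = S * (P * cfc k S) := by
      rw [cfc_mul (fun t : ℝ => t) (fun t => f t * k t) S continuous_id.continuousOn
        ((hf_cont.mul hk_cont).continuousOn), cfc_id' ℝ S, h1]
    have h3 : (fun t : ℝ => t * (f t * k t)) = f := by
      funext t
      rcases le_or_gt t (a/2) with ht | ht
      · rw [hf0 t ht, hk_def]; ring
      · have hmax : max t (a/2) = t := max_eq_left ht.le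
        have htne : t ≠ 0 := by intro h0; rw [h0] at ht; linarith
        rw [hk_def]
        simp only [hmax]
        field_simp
    rw [h3] at h2
    have hop : S * (P * cfc k S) = P := h2.symm.trans hP_def.symm
    conv_lhs => rw [← hop]
    simp [ContinuousLinearMap.mul_apply]
  have hsurjW : ∀ w ∈ W, ∃ y ∈ W, S y = w := by
    haveI : CompleteSpace W := hWclosed.completeSpace_coe
    set Srest : W →L[ℂ] H := S.comp (Submodule.subtypeL W) with hSrest_def
    have hanti : AntilipschitzWith (⟨2/a, by positivity⟩ : NNReal) Srest := by
      apply Srest.antilipschitz_of_bound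
      intro x
      have hx := hlow x.1 x.2
      have hrw : Srest x = S x.1 := rfl
      rw [hrw]
      show ‖x.1‖ ≤ (2/a) * ‖S x.1‖
      rw [div_mul_eq_mul_div, le_div_iff₀ ha_pos]
      nlinarith [hx]
    have hclosed_img : IsClosed (Set.range Srest) :=
      hanti.isClosed_range Srest.uniformContinuous
    have hsub2 : Set.range P ⊆ Set.range Srest := by
      rintro y ⟨x, rfl⟩
      exact ⟨⟨P (cfc k S x), hrange_sub _⟩, (hkey x).symm⟩
    have hWsub : (W : Set H) ⊆ Set.range Srest := by
      rw [hWset]; exact closure_minimal hsub2 hclosed_img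
    intro w hw
    obtain ⟨yw, hyw⟩ := hWsub hw
    exact ⟨yw.1, yw.2, hyw⟩
  -- apply the strong cohomology hypothesis and derive a contradiction
  obtain ⟨b, hbcont, hbW, hbcoc, hbnot⟩ := hsc W hWclosed hWinv hWne
  have hkeyb : ∀ g : G, S (b g) = π g (-(b z + b z⁻¹)) - (-(b z + b z⁻¹)) := by
    intro g
    have h1 : π g (b z) + b g = π z (b g) + b z := by
      rw [← hbcoc g z, ← hbcoc z g, hzc g]
    have h2 : π g (b z⁻¹) + b g = π z⁻¹ (b g) + b z⁻¹ := by
      rw [← hbcoc g z⁻¹, ← hbcoc z⁻¹ g, hzc' g]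
    have hSb : S (b g) = (b g - π z (b g)) + (b g - π z⁻¹ (b g)) := by
      rw [hSsum]
      rfl
    rw [hSb]
    have e1 : b g - π z (b g) = b z - π g (b z) := by
      rw [sub_eq_sub_iff_add_eq_add, add_comm (b g), add_comm (b z)]
      exact h1
    have e2 : b g - π z⁻¹ (b g) = b z⁻¹ - π g (b z⁻¹) := by
      rw [sub_eq_sub_iff_add_eq_add, add_comm (b g), add_comm (b z⁻¹)]
      exact h2
    rw [e1, e2, map_neg, map_add]
    abel
  obtain ⟨v₀, hv₀W, hv₀⟩ := hsurjW (-(b z + b z⁻¹))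
    (Submodule.neg_mem _ (Submodule.add_mem _ (hbW z) (hbW z⁻¹)))
  apply hbnot
  refine ⟨v₀, hv₀W, fun g => ?_⟩
  have hd : S (b g - (π g v₀ - v₀)) = 0 := by
    rw [map_sub, map_sub, hUS_apply g v₀, hv₀, hkeyb g]
    abel
  have hdW : b g - (π g v₀ - v₀) ∈ W :=
    Submodule.sub_mem _ (hbW g) (Submodule.sub_mem _ (hWinv g v₀ hv₀W) hv₀W)
  have hzero := hinjW _ hdW hd
  rw [sub_eq_zero] at hzero
  exact hzero
end

section
/- There exist a group G generated by 3 elements, whose commutator subgroup is abelian (i.e., G is metabelian), and an action of G by surjective affine isometries on the real Hilbert space ℓ²(ℤ, ℝ), such that every orbit of the action is dense in ℓ²(ℤ, ℝ). -/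
/-- `G` (a group) admits an action by surjective affine isometries on `ℓ²(ℤ, ℝ)`, is generated
by 3 elements, is metabelian, and every orbit of the action is dense. -/
def IsMetabelian3GenWithMinimalAction (G : Type) [Group G] : Prop :=
  (∃ a b c : G, Subgroup.closure {a, b, c} = ⊤) ∧
  (∀ x y : G, x ∈ commutator G → y ∈ commutator G → x * y = y * x) ∧
  ∃ α : G → (lp (fun _ : ℤ => ℝ) 2 ≃ᵃⁱ[ℝ] lp (fun _ : ℤ => ℝ) 2),
    (∀ g h : G, ∀ x : lp (fun _ : ℤ => ℝ) 2, α (g * h) x = α g (α h x)) ∧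
    ∀ x₀ : lp (fun _ : ℤ => ℝ) 2, Dense (Set.range fun g => α g x₀)

open scoped ENNReal

noncomputable section

abbrev Hsp : Type := lp (fun _ : ℤ => ℝ) 2

namespace Stmt13

lemma memℓp_comp (e : ℤ ≃ ℤ) (f : Hsp) : Memℓp (fun n => f (e n)) 2 := by
  apply memℓp_gen
  have h := lp.memℓp f
  rw [memℓp_gen_iff (by norm_num)] at h
  exact (e.summable_iff (f := fun i => ‖f i‖ ^ (2 : ℝ≥0∞).toReal)).2 h

/-- The linear isometry of `ℓ²(ℤ,ℝ)` induced by a permutation of `ℤ`. -/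
def lpCongr (e : ℤ ≃ ℤ) : Hsp ≃ₗᵢ[ℝ] Hsp where
  toFun f := ⟨fun n => f (e n), memℓp_comp e f⟩
  invFun f := ⟨fun n => f (e.symm n), memℓp_comp e.symm f⟩
  map_add' f g := by ext n; simp [lp.coeFn_add]; rfl
  map_smul' c f := by ext n; simp [lp.coeFn_smul]
  left_inv f := by ext n; simp
  right_inv f := by ext n; simp
  norm_map' f := by
    have h2 : (0:ℝ) < (2 : ℝ≥0∞).toReal := by norm_num
    rw [lp.norm_eq_tsum_rpow h2, lp.norm_eq_tsum_rpow h2]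
    congr 1
    exact e.tsum_eq (fun i => ‖f i‖ ^ (2 : ℝ≥0∞).toReal)

@[simp] lemma lpCongr_apply (e : ℤ ≃ ℤ) (f : Hsp) (n : ℤ) : lpCongr e f n = f (e n) := rfl

/-- The shift on `ℓ²(ℤ,ℝ)`. -/
def Sh : Hsp ≃ₗᵢ[ℝ] Hsp := lpCongr (Equiv.addRight 1)

lemma Sh_apply (f : Hsp) (n : ℤ) : Sh f n = f (n + 1) := rfl

lemma Sh_symm_apply (f : Hsp) (n : ℤ) : Sh.symm f n = f (n - 1) := rfl

lemma Sh_single (m : ℤ) (r : ℝ) : Sh (lp.single 2 m r) = lp.single 2 (m - 1) r := by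
  apply lp.ext
  funext n
  rw [Sh_apply]
  by_cases h : n = m - 1
  · subst h
    rw [lp.single_apply_self, sub_add_cancel, lp.single_apply_self]
  · rw [lp.single_apply_ne _ _ _ h, lp.single_apply_ne]
    omega

lemma Sh_symm_single (m : ℤ) (r : ℝ) : Sh.symm (lp.single 2 m r) = lp.single 2 (m + 1) r := by
  apply lp.ext
  funext n
  rw [Sh_symm_apply]
  by_cases h : n = m + 1
  · subst h
    rw [lp.single_apply_self, add_sub_cancel_right, lp.single_apply_self]
  · rw [lp.single_apply_ne _ _ _ h, lp.single_apply_ne]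
    omega

/-- The additive subgroup of `ℝ` generated by `1` and `√2` is dense. -/
lemma dense_one_sqrt_two :
    Dense ((AddSubgroup.closure {1, Real.sqrt 2} : AddSubgroup ℝ) : Set ℝ) := by
  rcases (AddSubgroup.closure {1, Real.sqrt 2}).dense_or_cyclic with h | ⟨a, ha⟩
  · exact h
  · exfalso
    have h1 : (1:ℝ) ∈ AddSubgroup.closure ({1, Real.sqrt 2} : Set ℝ) :=
      AddSubgroup.subset_closure (by simp)
    have h2 : Real.sqrt 2 ∈ AddSubgroup.closure ({1, Real.sqrt 2} : Set ℝ) :=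
      AddSubgroup.subset_closure (by simp)
    rw [ha, AddSubgroup.mem_closure_singleton] at h1 h2
    obtain ⟨m, hm⟩ := h1
    obtain ⟨n, hn⟩ := h2
    have hm0 : m ≠ 0 := by rintro rfl; simp at hm
    have : (m : ℝ) * Real.sqrt 2 = n := by
      have key : (m:ℝ) * (n • a) = (n:ℝ) * (m • a) := by
        push_cast [zsmul_eq_mul]; ring
      rw [hm, hn] at key
      simpa using key
    have hirr := irrational_sqrt_two
    have : Real.sqrt 2 = ((n / m : ℚ) : ℝ) := by
      push_cast
      field_simp at this ⊢
      linarith [this]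
    exact hirr ⟨(n/m : ℚ), this.symm⟩

/-- Key density lemma: an additive subgroup of `ℓ²(ℤ,ℝ)` containing `δ₀` and `√2·δ₀`
and stable under the shift and its inverse is dense. -/
lemma dense_aux (V : AddSubgroup Hsp)
    (h1 : lp.single 2 0 (1:ℝ) ∈ V) (h2 : lp.single 2 0 (Real.sqrt 2) ∈ V)
    (hS : ∀ v ∈ V, Sh v ∈ V) (hS' : ∀ v ∈ V, Sh.symm v ∈ V) :
    Dense (V : Set Hsp) := by
  have hCc : IsClosed (closure (V : Set Hsp)) := isClosed_closure
  -- closure of V as a set is an add subgroup; we work with membership directly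
  set C : AddSubgroup Hsp := V.topologicalClosure with hC
  have hCmem : ∀ x, x ∈ C ↔ x ∈ closure (V : Set Hsp) := fun x => Iff.rfl
  -- Step 0 : single 0 r ∈ C for all r
  have step0 : ∀ r : ℝ, lp.single 2 0 r ∈ C := by
    intro r
    have hsingle : ∀ s : ℝ, lp.single 2 (0:ℤ) s = s • (lp.single 2 (0:ℤ) (1:ℝ) : Hsp) := by
      intro s
      rw [← lp.single_smul]
      norm_num
    have hcont : Continuous fun s : ℝ => s • (lp.single 2 (0:ℤ) (1:ℝ) : Hsp) :=
      continuous_id.smul continuous_const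
    -- the preimage subgroup
    let φ : ℝ →+ Hsp :=
      { toFun := fun s => s • (lp.single 2 (0:ℤ) (1:ℝ) : Hsp)
        map_zero' := by simp
        map_add' := fun s t => add_smul s t _ }
    have hsub : (AddSubgroup.closure {1, Real.sqrt 2} : AddSubgroup ℝ) ≤ C.comap φ := by
      rw [AddSubgroup.closure_le]
      rintro x (rfl | rfl)
      · show φ 1 ∈ C
        have : φ 1 = (lp.single 2 (0:ℤ) (1:ℝ) : Hsp) := by simp [φ]
        rw [this]
        exact V.le_topologicalClosure h1
      · show φ (Real.sqrt 2) ∈ C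
        have : φ (Real.sqrt 2) = (lp.single 2 (0:ℤ) (Real.sqrt 2) : Hsp) := (hsingle _).symm
        rw [this]
        exact V.le_topologicalClosure h2
    have hr : r ∈ closure ((AddSubgroup.closure {1, Real.sqrt 2} : AddSubgroup ℝ) : Set ℝ) :=
      dense_one_sqrt_two r
    have : φ r ∈ closure (φ '' ((AddSubgroup.closure {1, Real.sqrt 2} : AddSubgroup ℝ) : Set ℝ)) :=
      (image_closure_subset_closure_image hcont) ⟨r, hr, rfl⟩
    have himg : φ '' ((AddSubgroup.closure {1, Real.sqrt 2} : AddSubgroup ℝ) : Set ℝ)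
        ⊆ (C : Set Hsp) := by
      rintro _ ⟨x, hx, rfl⟩
      exact hsub hx
    have hmem : φ r ∈ closure (C : Set Hsp) := closure_mono himg this
    rw [hsingle r]
    show φ r ∈ C
    have hclosed : IsClosed ((C : Set Hsp)) := by
      rw [hC]
      exact V.isClosed_topologicalClosure
    exact hclosed.closure_subset hmem
  have hclosed : IsClosed ((C : Set Hsp)) := V.isClosed_topologicalClosure
  have hSC : ∀ x ∈ C, Sh x ∈ C := by
    intro x hx
    have : Sh x ∈ closure (Sh '' (V : Set Hsp)) :=
      (image_closure_subset_closure_image Sh.continuous) ⟨x, hx, rfl⟩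
    have himg : Sh '' (V : Set Hsp) ⊆ (V : Set Hsp) := by
      rintro _ ⟨v, hv, rfl⟩; exact hS v hv
    exact closure_mono himg this
  have hSC' : ∀ x ∈ C, Sh.symm x ∈ C := by
    intro x hx
    have : Sh.symm x ∈ closure (Sh.symm '' (V : Set Hsp)) :=
      (image_closure_subset_closure_image Sh.symm.continuous) ⟨x, hx, rfl⟩
    have himg : Sh.symm '' (V : Set Hsp) ⊆ (V : Set Hsp) := by
      rintro _ ⟨v, hv, rfl⟩; exact hS' v hv
    exact closure_mono himg this
  -- Step 1 : all singles are in C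
  have step1 : ∀ (n : ℤ) (r : ℝ), lp.single 2 n r ∈ C := by
    intro n
    induction n using Int.induction_on with
    | zero => exact step0
    | succ k ih =>
        intro r
        have : (lp.single 2 ((k:ℤ) + 1) r : Hsp) = Sh.symm (lp.single 2 (k:ℤ) r) := by
          rw [Sh_symm_single]
        rw [this]
        exact hSC' _ (ih r)
    | pred k ih =>
        intro r
        have : (lp.single 2 (-(k:ℤ) - 1) r : Hsp) = Sh (lp.single 2 (-(k:ℤ)) r) := by
          rw [Sh_single]
        rw [this]
        exact hSC _ (ih r)
  -- Step 2 : C is everything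
  intro f
  show f ∈ closure (V : Set Hsp)
  have hsum : HasSum (fun i : ℤ => lp.single 2 i (f i : ℝ)) f :=
    lp.hasSum_single (by norm_num) f
  have htend : Filter.Tendsto (fun s : Finset ℤ => ∑ i ∈ s, lp.single 2 i (f i : ℝ))
      Filter.atTop (nhds f) := hsum
  have hmemC : ∀ s : Finset ℤ, (∑ i ∈ s, lp.single 2 i (f i : ℝ)) ∈ C := by
    intro s
    exact AddSubgroup.sum_mem C (fun i _ => step1 i (f i))
  have : f ∈ C := hclosed.mem_of_tendsto htend (Filter.Eventually.of_forall hmemC)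
  exact this

abbrev BigG := Hsp ≃ᵃⁱ[ℝ] Hsp

def aGen : BigG := Sh.toAffineIsometryEquiv
def tr (v : Hsp) : BigG := AffineIsometryEquiv.constVAdd ℝ Hsp v
def bGen : BigG := tr (lp.single 2 0 (1:ℝ))
def cGen : BigG := tr (lp.single 2 0 (Real.sqrt 2))

@[simp] lemma tr_apply (v x : Hsp) : tr v x = v + x := rfl
@[simp] lemma aGen_apply (x : Hsp) : aGen x = Sh x := rfl

lemma aGen_inv : aGen⁻¹ = Sh.symm.toAffineIsometryEquiv := by
  apply inv_eq_of_mul_eq_one_left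
  apply AffineIsometryEquiv.ext
  intro x
  show Sh.symm (Sh x) = x
  simp

lemma tr_add (v w : Hsp) : tr (v + w) = tr v * tr w := by
  apply AffineIsometryEquiv.ext
  intro x
  show v + w + x = v + (w + x)
  abel

lemma tr_zero : tr 0 = 1 := by
  apply AffineIsometryEquiv.ext
  intro x
  show (0 : Hsp) + x = x
  abel

lemma tr_neg (v : Hsp) : tr (-v) = (tr v)⁻¹ := by
  apply eq_inv_of_mul_eq_one_left
  rw [← tr_add]
  simp [tr_zero]

lemma conj_tr (v : Hsp) : aGen * tr v * aGen⁻¹ = tr (Sh v) := by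
  rw [aGen_inv]
  apply AffineIsometryEquiv.ext
  intro x
  show Sh (v + Sh.symm x) = Sh v + x
  rw [map_add]
  simp

lemma conj_tr' (v : Hsp) : aGen⁻¹ * tr v * aGen = tr (Sh.symm v) := by
  rw [aGen_inv]
  apply AffineIsometryEquiv.ext
  intro x
  show Sh.symm (v + Sh x) = Sh.symm v + x
  rw [map_add]
  simp

lemma lin_apply (e : BigG) (v : Hsp) : e.linearIsometryEquiv v = e v - e 0 := by
  have h := e.map_vsub v 0
  simpa [vsub_eq_sub] using h

/-- Taking the linear part is a group homomorphism. -/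
def lin : BigG →* (Hsp ≃ₗᵢ[ℝ] Hsp) where
  toFun e := e.linearIsometryEquiv
  map_one' := by
    apply LinearIsometryEquiv.ext
    intro v
    rw [lin_apply]
    show (1 : BigG) v - (1 : BigG) 0 = v
    simp
  map_mul' e f := by
    apply LinearIsometryEquiv.ext
    intro v
    rw [lin_apply]
    show (e * f) v - (e * f) 0 = e.linearIsometryEquiv (f.linearIsometryEquiv v)
    rw [AffineIsometryEquiv.coe_mul]
    show e (f v) - e (f 0) = _
    rw [lin_apply f, ← vsub_eq_sub, ← e.map_vsub, vsub_eq_sub]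

@[simp] lemma lin_aGen : lin aGen = Sh :=
  Sh.toAffineIsometryEquiv_linearIsometryEquiv

@[simp] lemma lin_tr (v : Hsp) : lin (tr v) = 1 := by
  apply LinearIsometryEquiv.ext
  intro u
  show (tr v).linearIsometryEquiv u = u
  rw [lin_apply]
  simp

lemma translation_of_lin_eq_one {e : BigG} (he : lin e = 1) (x : Hsp) : e x = x + e 0 := by
  have h : e.linearIsometryEquiv x = x := by rw [show e.linearIsometryEquiv = lin e from rfl, he]; rfl
  rw [lin_apply] at h
  linear_combination (norm := module) h

lemma trans_comm {e f : BigG} (he : lin e = 1) (hf : lin f = 1) : e * f = f * e := by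
  apply AffineIsometryEquiv.ext
  intro x
  show e (f x) = f (e x)
  rw [translation_of_lin_eq_one hf x, translation_of_lin_eq_one he (x + f 0),
    translation_of_lin_eq_one he x, translation_of_lin_eq_one hf (x + e 0)]
  abel


def Gsub : Subgroup BigG := Subgroup.closure {aGen, bGen, cGen}

lemma aGen_mem : aGen ∈ Gsub := Subgroup.subset_closure (by simp)
lemma bGen_mem : bGen ∈ Gsub := Subgroup.subset_closure (by simp)
lemma cGen_mem : cGen ∈ Gsub := Subgroup.subset_closure (by simp)

-- three generators of the subgroup
lemma gen_top : Subgroup.closure ({⟨aGen, aGen_mem⟩, ⟨bGen, bGen_mem⟩, ⟨cGen, cGen_mem⟩} :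
    Set Gsub) = ⊤ := by
  have h : ({⟨aGen, aGen_mem⟩, ⟨bGen, bGen_mem⟩, ⟨cGen, cGen_mem⟩} : Set Gsub)
      = ((↑) : Gsub → BigG) ⁻¹' {aGen, bGen, cGen} := by
    ext x
    simp [Subtype.ext_iff]
  rw [h]
  exact Subgroup.closure_closure_coe_preimage

lemma lin_eq_one_of_commutator {x : Gsub} (hx : x ∈ commutator Gsub) :
    lin (x : BigG) = 1 := by
  set ψ : Gsub →* (Hsp ≃ₗᵢ[ℝ] Hsp) := lin.comp Gsub.subtype with hψ
  have hG : Gsub ≤ (Subgroup.zpowers Sh).comap lin := by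
    rw [Gsub, Subgroup.closure_le]
    rintro y (rfl | rfl | rfl)
    · simp only [Set.mem_preimage, SetLike.mem_coe, Subgroup.mem_comap, lin_aGen]
      exact Subgroup.mem_zpowers Sh
    · simp only [Set.mem_preimage, SetLike.mem_coe, Subgroup.mem_comap, lin_tr]
      exact one_mem _
    · simp only [Set.mem_preimage, SetLike.mem_coe, Subgroup.mem_comap, lin_tr]
      exact one_mem _
  have hle : commutator Gsub ≤ ψ.ker := by
    rw [commutator_def]
    rw [Subgroup.commutator_le]
    intro g _ h _
    rw [MonoidHom.mem_ker, map_commutatorElement, commutatorElement_eq_one_iff_commute]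
    obtain ⟨m, hm⟩ := hG g.2
    obtain ⟨n, hn⟩ := hG h.2
    show Commute (lin (g : BigG)) (lin (h : BigG))
    rw [← hm, ← hn]
    exact (Commute.refl Sh).zpow_zpow m n
  exact hle hx

/-- The main construction. -/
theorem main : ∃ (G : Type) (inst : Group G), @IsMetabelian3GenWithMinimalAction G inst := by
  refine ⟨Gsub, inferInstance, ?_, ?_, ?_⟩
  · exact ⟨_, _, _, gen_top⟩
  · intro x y hx hy
    have := trans_comm (lin_eq_one_of_commutator hx) (lin_eq_one_of_commutator hy)
    exact Subtype.ext this
  · refine ⟨fun g => (g : BigG), fun g h x => rfl, ?_⟩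
    intro x₀
    -- the subgroup of available translations
    let V : AddSubgroup Hsp :=
      { carrier := {v | tr v ∈ Gsub}
        zero_mem' := by show tr 0 ∈ Gsub; rw [tr_zero]; exact one_mem _
        add_mem' := by
          intro v w hv hw
          show tr (v + w) ∈ Gsub
          rw [tr_add]
          exact mul_mem hv hw
        neg_mem' := by
          intro v hv
          show tr (-v) ∈ Gsub
          rw [tr_neg]
          exact inv_mem hv }
    have hV : Dense (V : Set Hsp) := by
      apply dense_aux
      · exact bGen_mem
      · exact cGen_mem
      · intro v hv
        show tr (Sh v) ∈ Gsub
        rw [← conj_tr]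
        exact mul_mem (mul_mem aGen_mem hv) (inv_mem aGen_mem)
      · intro v hv
        show tr (Sh.symm v) ∈ Gsub
        rw [← conj_tr']
        exact mul_mem (mul_mem (inv_mem aGen_mem) hv) aGen_mem
    intro y
    have h1 : y - x₀ ∈ closure (V : Set Hsp) := hV _
    have hcont : Continuous fun v : Hsp => v + x₀ := continuous_id.add continuous_const
    have h2 : (y - x₀) + x₀ ∈ closure ((fun v : Hsp => v + x₀) '' (V : Set Hsp)) :=
      (image_closure_subset_closure_image hcont) ⟨y - x₀, h1, rfl⟩
    have himg : (fun v : Hsp => v + x₀) '' (V : Set Hsp)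
        ⊆ Set.range fun g : Gsub => (g : BigG) x₀ := by
      rintro _ ⟨v, hv, rfl⟩
      exact ⟨⟨tr v, hv⟩, by simp⟩
    have : y ∈ closure ((fun v : Hsp => v + x₀) '' (V : Set Hsp)) := by
      simpa using h2
    exact closure_mono himg this

end Stmt13

/-- There is a metabelian group generated by 3 elements acting by surjective
affine isometries on `ℓ²(ℤ, ℝ)` with all orbits dense. -/
theorem exists_metabelian_minimal_action :
    ∃ (G : Type) (inst : Group G), @IsMetabelian3GenWithMinimalAction G inst :=
  Stmt13.main
end
end

section
/- The free group on 3 generators admits an action by surjective affine isometries on the real Hilbert space ℓ²(ℤ, ℝ) such that every orbit of the action is dense in ℓ²(ℤ, ℝ). -/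
open scoped ENNReal

noncomputable section

namespace FGMin

abbrev E := lp (fun _ : ℤ => ℝ) 2

lemma memℓp_comp (e : ℤ ≃ ℤ) (f : E) : Memℓp ((f : ℤ → ℝ) ∘ e) 2 := by
  have h : Memℓp (f : ℤ → ℝ) 2 := lp.memℓp f
  have hp : (0:ℝ) < (2 : ℝ≥0∞).toReal := by norm_num
  rw [memℓp_gen_iff hp] at h ⊢
  exact (e.summable_iff (f := fun i => ‖f i‖ ^ (2:ℝ≥0∞).toReal)).2 h

/-- reindexing isometry of ℓ². -/
def lpCongr (e : ℤ ≃ ℤ) : E ≃ₗᵢ[ℝ] E where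
  toFun f := ⟨(f : ℤ → ℝ) ∘ e, memℓp_comp e f⟩
  invFun f := ⟨(f : ℤ → ℝ) ∘ e.symm, memℓp_comp e.symm f⟩
  left_inv f := by ext k; simp
  right_inv f := by ext k; simp
  map_add' f g := by ext k; rfl
  map_smul' c f := by ext k; rfl
  norm_map' f := by
    have hp : (0:ℝ) < (2 : ℝ≥0∞).toReal := by norm_num
    rw [lp.norm_eq_tsum_rpow hp, lp.norm_eq_tsum_rpow hp]
    congr 1
    exact e.tsum_eq (f := fun i => ‖f i‖ ^ (2:ℝ≥0∞).toReal)

@[simp] lemma lpCongr_apply (e : ℤ ≃ ℤ) (f : E) (k : ℤ) : (lpCongr e f : ℤ → ℝ) k = f (e k) := rfl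

abbrev G := E ≃ᵃⁱ[ℝ] E

/-- shift by n as affine isometry -/
def W (n : ℤ) : G := (lpCongr (Equiv.addRight n)).toAffineIsometryEquiv

@[simp] lemma W_apply (n : ℤ) (f : E) (k : ℤ) : (W n f : ℤ → ℝ) k = f (k + n) := by
  simp [W, LinearIsometryEquiv.coe_toAffineIsometryEquiv]

/-- translation by v as affine isometry -/
def T (v : E) : G := AffineIsometryEquiv.constVAdd ℝ E v

@[simp] lemma T_apply (v : E) (x : E) : T v x = v + x := by
  simp [T, AffineIsometryEquiv.coe_constVAdd]

lemma gext {u v : G} (h : ∀ x : E, u x = v x) : u = v := by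
  apply DFunLike.ext _ _ h

lemma T_mul (v w : E) : T v * T w = T (v + w) := by
  apply gext; intro x
  simp [AffineIsometryEquiv.coe_mul, add_assoc]

lemma W_mul (m n : ℤ) : W m * W n = W (m + n) := by
  apply gext; intro x
  ext k
  have h1 : ((W m * W n) x : ℤ → ℝ) k = (W n x : ℤ → ℝ) (k + m) := by
    rw [AffineIsometryEquiv.coe_mul]; exact W_apply m (W n x) k
  rw [h1, W_apply, W_apply, add_assoc]

/-- T as additive hom into Additive G -/
def tauAdd : E →+ Additive G :=
  AddMonoidHom.mk' (fun v => Additive.ofMul (T v)) (by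
    intro v w
    simp [← ofMul_mul, T_mul])

lemma T_zpow (v : E) (n : ℤ) : (T v) ^ n = T (n • v) := by
  have := map_zsmul tauAdd n v
  simpa [tauAdd, ← ofMul_zpow] using this.symm

def WAdd : ℤ →+ Additive G :=
  AddMonoidHom.mk' (fun n => Additive.ofMul (W n)) (by
    intro m n
    simp [← ofMul_mul, W_mul])

lemma W_eq_zpow (n : ℤ) : W n = (W 1) ^ n := by
  have := map_zsmul WAdd n 1
  simp only [smul_eq_mul, mul_one] at this
  simpa [WAdd, ← ofMul_zpow] using this

lemma conj_T (L : E ≃ₗᵢ[ℝ] E) (v : E) :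
    L.toAffineIsometryEquiv * T v * (L.toAffineIsometryEquiv)⁻¹ = T (L v) := by
  apply gext; intro x
  simp only [AffineIsometryEquiv.coe_mul, Function.comp_apply, T_apply,
    AffineIsometryEquiv.coe_inv, LinearIsometryEquiv.coe_toAffineIsometryEquiv]
  rw [show (L.toAffineIsometryEquiv.symm x) = L.symm x from rfl]
  rw [map_add, L.apply_symm_apply]

end FGMin

namespace FGMin
open AffineIsometryEquiv

lemma single_add (i : ℤ) (c d : ℝ) :
    lp.single 2 i (c + d) = (lp.single 2 i c : E) + lp.single 2 i d := by
  ext k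
  rcases eq_or_ne k i with rfl | h
  · simp [lp.single_apply_self]
  · simp [lp.single_apply_ne _ _ _ h]

lemma T_zpow' (v : E) (n : ℤ) : (T v) ^ n = T ((n : ℝ) • v) := by
  rw [T_zpow, Int.cast_smul_eq_zsmul]

lemma single_real_smul (i : ℤ) (n : ℤ) (r : ℝ) :
    lp.single 2 i ((n : ℝ) * r) = ((n : ℝ) • lp.single 2 i r : E) := by
  rw [← lp.single_smul]
  rfl

lemma shift_single (n : ℤ) (c : ℝ) :
    lpCongr (Equiv.addRight n) (lp.single 2 0 c) = (lp.single 2 (-n) c : E) := by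
  ext k
  rcases eq_or_ne k (-n) with rfl | h
  · rw [lpCongr_apply]
    simp [lp.single_apply_self]
  · rw [lpCongr_apply]
    have h1 : (Equiv.addRight n) k ≠ 0 := by
      simp only [Equiv.coe_addRight]; omega
    rw [lp.single_apply_ne _ _ _ h1, lp.single_apply_ne _ _ _ h]

def fgen : Fin 3 → G := ![W 1, T (lp.single 2 0 1), T (lp.single 2 0 (Real.sqrt 2))]

def Φ : FreeGroup (Fin 3) →* G := FreeGroup.lift fgen

def H : Subgroup G := Φ.range

lemma W_mem (n : ℤ) : W n ∈ H := by
  have h1 : W 1 ∈ H := ⟨FreeGroup.of 0, by simp [Φ, fgen]⟩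
  rw [W_eq_zpow]
  exact H.zpow_mem h1 n

lemma T_single_zero_mem (a b : ℤ) : T (lp.single 2 0 ((a : ℝ) + b * Real.sqrt 2)) ∈ H := by
  have h1 : T (lp.single 2 0 (1:ℝ)) ∈ H := ⟨FreeGroup.of 1, by simp [Φ, fgen]⟩
  have h2 : T (lp.single 2 0 (Real.sqrt 2)) ∈ H := ⟨FreeGroup.of 2, by simp [Φ, fgen]⟩
  have ha : T (lp.single 2 0 ((a:ℝ))) ∈ H := by
    rw [show ((a:ℝ)) = (a:ℝ) * 1 by ring, single_real_smul, ← T_zpow']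
    exact H.zpow_mem h1 a
  have hb : T (lp.single 2 0 ((b:ℝ) * Real.sqrt 2)) ∈ H := by
    rw [single_real_smul, ← T_zpow']
    exact H.zpow_mem h2 b
  rw [single_add]
  rw [← T_mul]
  exact H.mul_mem ha hb

lemma T_single_mem (m : ℤ) (a b : ℤ) : T (lp.single 2 m ((a : ℝ) + b * Real.sqrt 2)) ∈ H := by
  have h := H.mul_mem (H.mul_mem (W_mem (-m)) (T_single_zero_mem a b)) (H.inv_mem (W_mem (-m)))
  rwa [show W (-m) = ((lpCongr (Equiv.addRight (-m))).toAffineIsometryEquiv) from rfl,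
    conj_T, shift_single, neg_neg] at h

end FGMin

namespace FGMin

lemma dense_R (x : ℝ) {δ : ℝ} (hδ : 0 < δ) :
    ∃ a b : ℤ, |x - ((a:ℝ) + (b:ℝ) * Real.sqrt 2)| < δ := by
  set S : AddSubgroup ℝ := AddSubgroup.closure {1, Real.sqrt 2} with hS
  have hdense : Dense (S : Set ℝ) := by
    rcases S.dense_or_cyclic with h | ⟨c, hc⟩
    · exact h
    · exfalso
      have h1 : (1:ℝ) ∈ S := AddSubgroup.subset_closure (by simp)
      have h2 : Real.sqrt 2 ∈ S := AddSubgroup.subset_closure (by simp)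
      rw [hc, AddSubgroup.mem_closure_singleton] at h1 h2
      obtain ⟨m, hm⟩ := h1
      obtain ⟨n, hn⟩ := h2
      have hm0 : m ≠ 0 := by rintro rfl; simp at hm
      apply irrational_sqrt_two
      refine ⟨(n : ℚ) / (m : ℚ), ?_⟩
      have hmr : (m:ℝ) ≠ 0 := Int.cast_ne_zero.2 hm0
      push_cast
      rw [div_eq_iff hmr]
      rw [zsmul_eq_mul] at hm hn
      calc (n:ℝ) = (n:ℝ) * ((m:ℝ) * c) := by rw [hm]; ring
        _ = ((n:ℝ) * c) * m := by ring
        _ = Real.sqrt 2 * m := by rw [hn]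
  have hx := Metric.dense_iff.1 hdense x δ hδ
  obtain ⟨y, hy1, hy2⟩ := hx
  have : ∃ a b : ℤ, a • (1:ℝ) + b • Real.sqrt 2 = y := by
    rwa [← AddSubgroup.mem_closure_pair]
  obtain ⟨a, b, hab⟩ := this
  refine ⟨a, b, ?_⟩
  have : y = (a:ℝ) + (b:ℝ) * Real.sqrt 2 := by
    rw [← hab]; push_cast [zsmul_eq_mul]; ring
  rw [← this]
  rw [Metric.mem_ball, Real.dist_eq, abs_sub_comm] at hy1
  exact hy1

lemma T_sum_mem (s : Finset ℤ) (c : ℤ → ℝ) (hc : ∀ i, ∃ a b : ℤ, c i = (a:ℝ) + (b:ℝ) * Real.sqrt 2) :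
    T (∑ i ∈ s, lp.single 2 i (c i)) ∈ H := by
  classical
  induction s using Finset.induction_on with
  | empty =>
      simp only [Finset.sum_empty]
      have : T (0 : E) = 1 := by
        apply gext; intro x; simp
      rw [this]; exact H.one_mem
  | insert _ _ hnot ih =>
      rw [Finset.sum_insert hnot, ← T_mul]
      obtain ⟨a, b, hab⟩ := hc _
      exact H.mul_mem (hab ▸ T_single_mem _ a b) ih

end FGMin

namespace FGMin

lemma single_sub (i : ℤ) (c d : ℝ) :
    lp.single 2 i (c - d) = (lp.single 2 i c : E) - lp.single 2 i d := by
  rw [sub_eq_add_neg, single_add, lp.single_neg, sub_eq_add_neg]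

end FGMin

open FGMin in
/-- The free group on 3 generators admits an action by surjective affine
isometries on `ℓ²(ℤ, ℝ)` with all orbits dense. -/
theorem freeGroup_exists_minimal_affine_isometric_action :
    ∃ α : FreeGroup (Fin 3) → (lp (fun _ : ℤ => ℝ) 2 ≃ᵃⁱ[ℝ] lp (fun _ : ℤ => ℝ) 2),
      (∀ g h : FreeGroup (Fin 3), ∀ x : lp (fun _ : ℤ => ℝ) 2, α (g * h) x = α g (α h x)) ∧
      ∀ x₀ : lp (fun _ : ℤ => ℝ) 2, Dense (Set.range fun g => α g x₀) := by
  classical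
  refine ⟨fun g => Φ g, fun g h x => by simp [map_mul], ?_⟩
  intro x₀
  rw [Metric.dense_iff]
  intro y r hr
  set z : E := y - x₀ with hz
  have hp' : (0:ℝ) < (2 : ℝ≥0∞).toReal := by norm_num
  have h2 : ((2 : ℝ≥0∞)).toReal = 2 := by norm_num
  -- step 1: finite approximation
  have hs : HasSum (fun i : ℤ => (lp.single 2 i (z i) : E)) z :=
    lp.hasSum_single (by norm_num) z
  have hev : ∀ᶠ s : Finset ℤ in Filter.atTop,
      dist (∑ i ∈ s, (lp.single 2 i (z i) : E)) z < r / 2 :=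
    Metric.tendsto_nhds.1 hs (r / 2) (by linarith)
  obtain ⟨s, hs1⟩ := hev.exists
  -- step 2: coordinates in ℤ + ℤ√2
  set δ : ℝ := r / (2 * (s.card + 1)) with hδdef
  have hδ : 0 < δ := by
    apply div_pos (by linarith)
    positivity
  have hchoice : ∀ i : ℤ, ∃ c : ℝ,
      (∃ a b : ℤ, c = (a:ℝ) + (b:ℝ) * Real.sqrt 2) ∧ |z i - c| < δ := by
    intro i
    obtain ⟨a, b, hab⟩ := dense_R (z i) hδ
    exact ⟨_, ⟨a, b, rfl⟩, hab⟩
  choose c hc1 hc2 using hchoice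
  set w : E := ∑ i ∈ s, (lp.single 2 i (c i) : E) with hw
  have hTw : T w ∈ H := T_sum_mem s c hc1
  obtain ⟨g, hg⟩ := hTw
  refine ⟨x₀ + w, ?_, ⟨g, ?_⟩⟩
  · -- distance estimate
    rw [Metric.mem_ball, dist_eq_norm]
    have key : x₀ + w - y = w - z := by rw [hz]; abel
    rw [key]
    have e1 : ‖w - z‖ ≤ ‖w - ∑ i ∈ s, (lp.single 2 i (z i) : E)‖ +
        ‖(∑ i ∈ s, (lp.single 2 i (z i) : E)) - z‖ := by
      have := norm_sub_le_norm_sub_add_norm_sub w (∑ i ∈ s, (lp.single 2 i (z i) : E)) z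
      exact this
    have e2 : ‖(∑ i ∈ s, (lp.single 2 i (z i) : E)) - z‖ < r / 2 := by
      rwa [dist_eq_norm] at hs1
    have e3 : ‖w - ∑ i ∈ s, (lp.single 2 i (z i) : E)‖ < r / 2 := by
      have hwz : w - ∑ i ∈ s, (lp.single 2 i (z i) : E)
          = ∑ i ∈ s, (lp.single 2 i (c i - z i) : E) := by
        rw [hw, ← Finset.sum_sub_distrib]
        exact Finset.sum_congr rfl fun i _ => by rw [single_sub]
      rw [hwz]
      have hns := lp.norm_sum_single hp' (fun i => c i - z i) s
      rw [h2] at hns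
      have hbound : ∑ i ∈ s, ‖c i - z i‖ ^ (2:ℝ) < (r/2) ^ (2:ℝ) := by
        have hterm : ∀ i ∈ s, ‖c i - z i‖ ^ (2:ℝ) ≤ δ ^ 2 := by
          intro i _
          rw [show ((2:ℝ)) = ((2:ℕ):ℝ) by norm_num, Real.rpow_natCast]
          have : ‖c i - z i‖ ≤ δ := by
            rw [Real.norm_eq_abs, abs_sub_comm]
            exact (hc2 i).le
          exact pow_le_pow_left₀ (norm_nonneg _) this 2
        calc ∑ i ∈ s, ‖c i - z i‖ ^ (2:ℝ) ≤ ∑ _i ∈ s, δ ^ 2 :=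
              Finset.sum_le_sum hterm
          _ = s.card * δ ^ 2 := by rw [Finset.sum_const]; ring
          _ < (r/2) ^ (2:ℝ) := by
              rw [show ((2:ℝ)) = ((2:ℕ):ℝ) by norm_num, Real.rpow_natCast]
              rw [hδdef]
              have hcard : (0:ℝ) ≤ (s.card : ℝ) := Nat.cast_nonneg _
              have hrr : 0 < r ^ 2 := by positivity
              rw [div_pow, div_pow, ← mul_div_assoc]
              rw [div_lt_div_iff₀ (by positivity) (by positivity)]
              push_cast
              nlinarith [mul_nonneg hrr.le hcard, mul_nonneg hrr.le (sq_nonneg ((s.card:ℝ)))]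
      have := hns ▸ hbound
      have hfin : ‖∑ i ∈ s, (lp.single 2 i (c i - z i) : E)‖ ^ (2:ℝ) < (r/2) ^ (2:ℝ) := this
      exact (Real.rpow_lt_rpow_iff (norm_nonneg _) (by linarith) (by norm_num)).1 hfin
    linarith
  · show Φ g x₀ = x₀ + w
    rw [hg, T_apply, add_comm]
end
end

section
/- Let X be the set of elements of the real Hilbert space ℓ²(ℤ, ℝ) all of whose coordinates are integers. Then X is enveloping (the closed convex hull of X equals ℓ²(ℤ, ℝ)), but X is not coarsely dense: for every C ≥ 0 there exists x ∈ ℓ²(ℤ, ℝ) whose distance to X exceeds C (for instance, the element taking value 1/2 on a set of 4n indices and 0 elsewhere is at distance √n from X). -/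
open scoped BigOperators ENNReal

/-- In `ℓ²(ℤ, ℝ)`, the set `X` of points with integer coordinates is
enveloping (its closed convex hull is everything) but not coarsely dense (for every `C ≥ 0`
some point of the space is at distance `> C` from every point of `X`). -/
theorem integer_points_enveloping_not_coarselyDense :
    closure (convexHull ℝ {x : lp (fun _ : ℤ => ℝ) 2 | ∀ k : ℤ, ∃ n : ℤ, x k = (n : ℝ)})
      = Set.univ ∧
    ∀ C : ℝ, 0 ≤ C → ∃ x : lp (fun _ : ℤ => ℝ) 2,
      ∀ y ∈ {x : lp (fun _ : ℤ => ℝ) 2 | ∀ k : ℤ, ∃ n : ℤ, x k = (n : ℝ)}, C < dist x y := by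
  set X : Set (lp (fun _ : ℤ => ℝ) 2) :=
    {x : lp (fun _ : ℤ => ℝ) 2 | ∀ k : ℤ, ∃ n : ℤ, x k = (n : ℝ)} with hX
  have hXsub : X ⊆ closure (convexHull ℝ X) :=
    (subset_convexHull ℝ X).trans subset_closure
  constructor
  · -- enveloping
    by_contra h
    obtain ⟨x, hx⟩ := (Set.ne_univ_iff_exists_notMem _).mp h
    obtain ⟨f, u, hfu, hux⟩ := geometric_hahn_banach_closed_point
      ((convex_convexHull ℝ X).closure) isClosed_closure hx
    -- singles with integer values lie in X
    have hsingle_mem : ∀ (i : ℤ) (n : ℤ), lp.single 2 i ((n : ℝ)) ∈ X := by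
      intro i n k
      by_cases hk : k = i
      · subst hk; exact ⟨n, by rw [lp.single_apply_self]⟩
      · exact ⟨0, by rw [lp.single_apply_ne _ _ _ hk]; simp⟩
    have hzero : ∀ i : ℤ, f (lp.single 2 i (1 : ℝ)) = 0 := by
      intro i
      set c : ℝ := f (lp.single 2 i (1 : ℝ)) with hc
      have hbound : ∀ n : ℤ, (n : ℝ) * c < u := by
        intro n
        have hmem := hXsub (hsingle_mem i n)
        have := hfu _ hmem
        have heq := lp.single_smul (E := fun _ : ℤ => ℝ) (𝕜 := ℝ) 2 i ((n : ℝ)) (1 : ℝ)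
        rw [smul_eq_mul, mul_one] at heq
        rwa [heq, map_smul, smul_eq_mul] at this
      rcases lt_trichotomy c 0 with hlt | heq | hgt
      · obtain ⟨n, hn⟩ := exists_int_lt (u / c)
        rw [lt_div_iff_of_neg hlt] at hn
        linarith [hbound n]
      · exact heq
      · obtain ⟨n, hn⟩ := exists_int_gt (u / c)
        have : u < (n : ℝ) * c := by
          rw [div_lt_iff₀ hgt] at hn
          linarith [hn]
        linarith [hbound n]
    -- hence f = 0 by density of singles
    have hfx : f x = 0 := by
      have hs := lp.hasSum_single (E := fun _ : ℤ => ℝ) (p := 2) (by norm_num) x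
      have hs2 : HasSum (fun i : ℤ => f (lp.single 2 i (x i : ℝ))) (f x) :=
        hs.mapL f
      have hterms : ∀ i : ℤ, f (lp.single 2 i (x i)) = 0 := by
        intro i
        have hxi := lp.single_smul (E := fun _ : ℤ => ℝ) (𝕜 := ℝ) 2 i (x i) (1 : ℝ)
        rw [smul_eq_mul, mul_one] at hxi
        rw [hxi, map_smul, smul_eq_mul, hzero i, mul_zero]
      simp only [hterms] at hs2
      exact hs2.unique hasSum_zero
    have h0 : (0 : lp (fun _ : ℤ => ℝ) 2) ∈ X := by
      intro k; exact ⟨0, by simp⟩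
    have := hfu 0 (hXsub h0)
    rw [map_zero] at this
    rw [hfx] at hux
    linarith
  · -- not coarsely dense
    intro C hC
    set N : ℕ := ⌈(2 * C + 1) ^ 2⌉₊ + 1 with hN
    have hNC : (4 : ℝ) * C ^ 2 < N := by
      have h1 : (2 * C + 1) ^ 2 ≤ (⌈(2 * C + 1) ^ 2⌉₊ : ℝ) := Nat.le_ceil _
      have h2 : (N : ℝ) = (⌈(2 * C + 1) ^ 2⌉₊ : ℝ) + 1 := by push_cast [hN]; ring
      nlinarith
    set s : Finset ℤ := (Finset.range N).map ⟨Int.ofNat, fun a b h => by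
      simpa using h⟩ with hs
    set x : lp (fun _ : ℤ => ℝ) 2 := ∑ i ∈ s, lp.single 2 i ((1:ℝ)/2) with hx
    have hxcoord : ∀ i ∈ s, x i = 1 / 2 := by
      intro i hi
      rw [hx, lp.coeFn_sum, Finset.sum_apply]
      rw [Finset.sum_eq_single i]
      · rw [lp.single_apply_self]
      · intro j hj hji
        exact lp.single_apply_ne _ _ _ (Ne.symm hji)
      · intro h; exact absurd hi h
    refine ⟨x, ?_⟩
    intro y hy
    have key := lp.sum_rpow_le_norm_rpow (p := 2) (by norm_num) (x - y) s
    have htoReal : (2 : ℝ≥0∞).toReal = 2 := by norm_num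
    rw [htoReal] at key
    have hterm : ∀ i ∈ s, (1:ℝ)/4 ≤ ‖(x - y : lp (fun _ : ℤ => ℝ) 2) i‖ ^ (2:ℝ) := by
      intro i hi
      obtain ⟨n, hn⟩ := hy i
      have hcoord : (x - y : lp (fun _ : ℤ => ℝ) 2) i = 1/2 - (n : ℝ) := by
        rw [lp.coeFn_sub, Pi.sub_apply, hxcoord i hi, hn]
      have habs : (1:ℝ)/2 ≤ |1/2 - (n : ℝ)| := by
        rcases le_or_gt n 0 with h | h
        · have : (n : ℝ) ≤ 0 := by exact_mod_cast h
          rw [abs_of_nonneg (by linarith)]; linarith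
        · have : (1 : ℝ) ≤ (n : ℝ) := by exact_mod_cast h
          rw [abs_of_nonpos (by linarith)]; linarith
      rw [hcoord, Real.norm_eq_abs]
      have h4 : (1:ℝ)/4 = ((1:ℝ)/2) ^ (2:ℝ) := by
        rw [show (2:ℝ) = ((2:ℕ):ℝ) by norm_num, Real.rpow_natCast]; norm_num
      rw [h4]
      exact Real.rpow_le_rpow (by norm_num) habs (by norm_num)
    have hsum : (N : ℝ) / 4 ≤ ∑ i ∈ s, ‖(x - y : lp (fun _ : ℤ => ℝ) 2) i‖ ^ (2:ℝ) := by
      calc (N : ℝ) / 4 = ∑ _i ∈ s, (1:ℝ)/4 := by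
            rw [Finset.sum_const, hs, Finset.card_map, Finset.card_range]
            push_cast; ring
        _ ≤ _ := Finset.sum_le_sum hterm
    have hnorm2 : (N : ℝ) / 4 ≤ ‖(x - y : lp (fun _ : ℤ => ℝ) 2)‖ ^ (2:ℝ) :=
      le_trans hsum key
    rw [dist_eq_norm]
    by_contra hcon
    push_neg at hcon
    have hnn : (0:ℝ) ≤ ‖(x - y : lp (fun _ : ℤ => ℝ) 2)‖ := norm_nonneg _
    have : ‖(x - y : lp (fun _ : ℤ => ℝ) 2)‖ ^ (2:ℝ) ≤ C ^ (2:ℝ) :=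
      Real.rpow_le_rpow hnn hcon (by norm_num)
    rw [show ((2:ℝ)) = ((2:ℕ):ℝ) by norm_num, Real.rpow_natCast, Real.rpow_natCast] at this
    rw [show ((2:ℝ)) = ((2:ℕ):ℝ) by norm_num, Real.rpow_natCast] at hnorm2
    have hfin : (N : ℝ) / 4 ≤ C ^ 2 := le_trans hnorm2 this
    have h1 : (N : ℝ) ≤ C ^ 2 * 4 := (div_le_iff₀ (by norm_num)).mp hfin
    have h2 : (4 : ℝ) * C ^ 2 < C ^ 2 * 4 := hNC.trans_le h1
    rw [mul_comm] at h2
    exact lt_irrefl _ h2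
end

section
/- Let H be an infinite-dimensional real Hilbert space. Then no subset X of H can be simultaneously coarsely dense in H and proper for the induced metric (meaning every closed bounded subset of X is compact). Equivalently, if X is coarsely dense in H, then X contains a bounded subset that is closed in H, infinite, and discrete. -/
/-- A `1`-separated set is closed. -/
lemma sep_isClosed {H : Type*} [NormedAddCommGroup H] {S : Set H}
    (hsep : ∀ x ∈ S, ∀ y ∈ S, x ≠ y → 1 ≤ dist x y) : IsClosed S := by
  rw [← closure_subset_iff_isClosed]
  intro a ha'
  have ha : ∀ ε > 0, ∃ b ∈ S, dist a b < ε := Metric.mem_closure_iff.mp ha'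
  obtain ⟨x, hxS, hx⟩ := ha (1/2) (by norm_num)
  have : a = x := by
    by_contra hax
    have hd : 0 < dist a x := dist_pos.mpr hax
    obtain ⟨y, hyS, hy⟩ := ha (min (1/2) (dist a x)) (lt_min (by norm_num) hd)
    have hyx : y ≠ x := by
      intro h; subst h
      exact absurd (lt_min_iff.mp hy).2 (lt_irrefl _)
    have := hsep y hyS x hxS hyx
    have h1 : dist y x ≤ dist y a + dist a x := dist_triangle _ _ _
    have h2 : dist a y < 1/2 := lt_of_lt_of_le hy (min_le_left _ _)
    have h3 : dist a x < 1/2 := hx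
    rw [dist_comm a y] at h2
    linarith
  exact this ▸ hxS

/-- A `1`-separated set is discrete. -/
lemma sep_discrete {H : Type*} [NormedAddCommGroup H] {S : Set H}
    (hsep : ∀ x ∈ S, ∀ y ∈ S, x ≠ y → 1 ≤ dist x y) : DiscreteTopology S := by
  rw [discreteTopology_iff_isOpen_singleton]
  rintro ⟨x, hxS⟩
  have : {(⟨x, hxS⟩ : S)} = (Subtype.val ⁻¹' Metric.ball x 1 : Set S) := by
    ext ⟨y, hyS⟩
    simp only [Set.mem_singleton_iff, Set.mem_preimage, Metric.mem_ball, Subtype.mk.injEq]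
    constructor
    · rintro rfl; simp
    · intro h
      by_contra hne
      exact absurd h (not_lt.mpr (dist_comm x y ▸ hsep x hxS y hyS (Ne.symm hne)))
  rw [this]
  exact isOpen_induced Metric.isOpen_ball

lemma key_lemma {H : Type*} [NormedAddCommGroup H] [InnerProductSpace ℝ H] [CompleteSpace H]
    (hinf : ¬ FiniteDimensional ℝ H) (X : Set H)
    (hX : ∃ C : ℝ, 0 ≤ C ∧ ∀ x : H, ∃ y ∈ X, dist x y ≤ C) :
    ∃ S : Set H, S ⊆ X ∧ Bornology.IsBounded S ∧ IsClosed S ∧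
      S.Infinite ∧ DiscreteTopology S := by
  obtain ⟨C, hC, hdense⟩ := hX
  obtain ⟨R, f, hR, hfle, hsep⟩ := exists_seq_norm_le_one_le_norm_sub (𝕜 := ℝ) hinf
  set t : ℝ := 2 * C + 1 with ht
  have htpos : 0 < t := by positivity
  -- choose points of X near t • f n
  choose y hyX hyd using fun n => hdense (t • f n)
  have hysep : ∀ m n, m ≠ n → t - 2 * C ≤ dist (y m) (y n) := by
    intro m n hmn
    have h1 : t ≤ dist (t • f m) (t • f n) := by
      rw [dist_eq_norm, ← smul_sub, norm_smul, Real.norm_eq_abs, abs_of_pos htpos]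
      have := mul_le_mul_of_nonneg_left (hsep hmn) htpos.le
      linarith
    have h2 : dist (t • f m) (t • f n) ≤ dist (t • f m) (y m) + dist (y m) (y n)
        + dist (y n) (t • f n) := dist_triangle4 _ _ _ _
    have h3 := hyd m
    have h4 := hyd n
    rw [dist_comm (y n)] at h2
    linarith
  have hysep1 : ∀ m n, m ≠ n → 1 ≤ dist (y m) (y n) := by
    intro m n hmn
    have := hysep m n hmn
    simp only [ht] at this
    linarith
  set S : Set H := Set.range y with hS
  have hsepS : ∀ a ∈ S, ∀ b ∈ S, a ≠ b → 1 ≤ dist a b := by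
    rintro a ⟨m, rfl⟩ b ⟨n, rfl⟩ hab
    exact hysep1 m n (fun h => hab (by rw [h]))
  have hinj : Function.Injective y := by
    intro m n h
    by_contra hmn
    have := hysep1 m n hmn
    rw [h, dist_self] at this
    linarith
  refine ⟨S, ?_, ?_, sep_isClosed hsepS, ?_, sep_discrete hsepS⟩
  · rintro a ⟨n, rfl⟩; exact hyX n
  · apply Metric.isBounded_range_iff.mpr
    refine ⟨2 * (t * R + C), fun m n => ?_⟩
    have h1 : dist (y m) (y n) ≤ dist (y m) (t • f m) + dist (t • f m) (t • f n)
        + dist (t • f n) (y n) := dist_triangle4 _ _ _ _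
    have h0 : dist (t • f m) (t • f n) ≤ dist (t • f m) 0 + dist 0 (t • f n) :=
      dist_triangle _ _ _
    have h2 : ∀ k, dist (t • f k) 0 ≤ t * R := by
      intro k
      rw [dist_zero_right, norm_smul, Real.norm_eq_abs, abs_of_pos htpos]
      exact mul_le_mul_of_nonneg_left (hfle k) htpos.le
    have h3 := h2 m
    have h4 := h2 n
    rw [dist_comm 0] at h0
    have h5 := hyd m
    have h6 := hyd n
    have h7 : dist (y m) (t • f m) = dist (t • f m) (y m) := dist_comm _ _
    linarith
  · exact Set.infinite_range_of_injective hinj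

/-- In an infinite-dimensional real Hilbert space, no subset is both
coarsely dense and proper for the induced metric (all intersections with closed balls
compact). Equivalently, every coarsely dense subset contains a bounded subset that is closed
in `H`, infinite and discrete. -/
theorem no_coarselyDense_proper_subset_of_infiniteDimensional
    {H : Type*} [NormedAddCommGroup H] [InnerProductSpace ℝ H] [CompleteSpace H]
    (hinf : ¬ FiniteDimensional ℝ H) :
    (∀ X : Set H, (∃ C : ℝ, 0 ≤ C ∧ ∀ x : H, ∃ y ∈ X, dist x y ≤ C) →
      ¬ ∀ (c : H) (r : ℝ), IsCompact (X ∩ Metric.closedBall c r)) ∧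
    (∀ X : Set H, (∃ C : ℝ, 0 ≤ C ∧ ∀ x : H, ∃ y ∈ X, dist x y ≤ C) →
      ∃ S : Set H, S ⊆ X ∧ Bornology.IsBounded S ∧ IsClosed S ∧
        S.Infinite ∧ DiscreteTopology S) := by
  constructor
  · intro X hX hcomp
    obtain ⟨S, hSX, hSb, hScl, hSinf, hSd⟩ := key_lemma hinf X hX
    obtain ⟨r, hr⟩ := hSb.subset_closedBall 0
    have hsub : S ⊆ X ∩ Metric.closedBall 0 r := fun x hx => ⟨hSX hx, hr hx⟩
    have hScomp : IsCompact S := (hcomp 0 r).of_isClosed_subset hScl hsub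
    exact hSinf (hScomp.finite (isDiscrete_iff_discreteTopology.mpr hSd))
  · exact key_lemma hinf
end
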